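/- The sum of the geometric series identity for f-polynomials of nestohedra: for a connected building set ℬ on a finite set I with |I| ≥ 2, the f-polynomial of the nestohedron N_ℬ satisfies f_ℬ(t) = Σ_{S ⊊ I} t^{|I|−|S|−1} f_{ℬ|_S}(t), where ℬ|_S = {A ∈ ℬ : A ⊆ S}. -/

import Mathlib

open Pointwise Set

variable {I : Type*} [Fintype I] [DecidableEq I]

/-- The face of `P` on which the linear functional `w` attains its maximum. -/
def maxFace (P : Set (I → ℝ)) (w : (I → ℝ) →ₗ[ℝ] ℝ) : Set (I → ℝ) :=
  {x ∈ P | ∀ y ∈ P, w y ≤ w x}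

/-- The dimension of a subset of `ℝ^I`: the dimension of its linear span of differences. -/
noncomputable def polyDim (F : Set (I → ℝ)) : ℕ :=
  Module.finrank ℝ ↥(vectorSpan ℝ F)

/-- The `f`-polynomial of `P`: the sum of `t^{dim F}` over the nonempty faces `F` of `P`. -/
noncomputable def fPoly (P : Set (I → ℝ)) : Polynomial ℝ :=
  ∑ᶠ F ∈ {F : Set (I → ℝ) | (∃ w, F = maxFace P w) ∧ F.Nonempty},
    Polynomial.X ^ polyDim F

/-- The simplex `Δ_J = conv(e_j : j ∈ J)`. -/
def simplexOf (J : Finset I) : Set (I → ℝ) :=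
  convexHull ℝ ((fun j => Pi.single j (1 : ℝ)) '' (↑J : Set I))

/-- The nestohedron of a building set: the Minkowski sum `Σ_{J ∈ ℬ} Δ_J`. -/
noncomputable def nestohedron (ℬ : Finset (Finset I)) : Set (I → ℝ) :=
  ∑ J ∈ ℬ, simplexOf J

/-- A building set on `I`: a collection of nonempty subsets of `I` containing all
singletons and closed under unions of intersecting members. -/
def IsBuildingSet (ℬ : Finset (Finset I)) : Prop :=
  (∀ i : I, {i} ∈ ℬ) ∧ (∅ ∉ ℬ) ∧
    ∀ A ∈ ℬ, ∀ B ∈ ℬ, (A ∩ B).Nonempty → A ∪ B ∈ ℬ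

/-!
A face of `N_ℬ` is the set where a linear functional `w` is maximal. Let `T` be the set of
coordinates `i` on which `w (e_i)` is maximal and `S = I \ T ≠ I`. Each `Δ_J` with `J ⊆ S`
contributes its own `w`-face, and each other `Δ_J` contributes `Δ_{J \ S}`; so the face is
`Q_S + F`, where `F` is a face of `N_{ℬ|S}` and `Q_S = Σ_{J ⊄ S} Δ_{J \ S}`. Every pair `(S, F)`
arises, by raising `w` on `I \ S` above all its values on `S`, and the pair is determined by the
face: the face of a Minkowski summand is determined by the face of the sum, and `Δ_I` is a
summand because `ℬ` is connected. Finally `Q_S` has `Δ_{I \ S}` as a summand and lives in the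
coordinates outside `S`, while `F` lives in those of `S`, so
`dim (Q_S + F) = |I| - |S| - 1 + dim F`.
-/

lemma Set.finsetSum_nonempty {ι α : Type*} [AddCommMonoid α] {s : Finset ι} {f : ι → Set α}
    (h : ∀ i ∈ s, (f i).Nonempty) : (∑ i ∈ s, f i).Nonempty := by
  choose! g hg using h
  exact ⟨_, Set.finsetSum_mem_finsetSum s f g hg⟩

section VectorSpan

variable {k V : Type*} [Ring k] [AddCommGroup V] [Module k V]

lemma vectorSpan_le_of_subset {s : Set V} {p : Submodule k V} (h : s ⊆ p) :
    vectorSpan k s ≤ p := by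
  rw [vectorSpan_def, Submodule.span_le]
  rintro - ⟨x, hx, y, hy, rfl⟩
  exact p.sub_mem (h hx) (h hy)

lemma vectorSpan_add {A B : Set V} (hA : A.Nonempty) (hB : B.Nonempty) :
    vectorSpan k (A + B) = vectorSpan k A ⊔ vectorSpan k B := by
  obtain ⟨a₀, ha₀⟩ := hA
  obtain ⟨b₀, hb₀⟩ := hB
  refine le_antisymm ?_ (sup_le ?_ ?_)
  · rw [vectorSpan_def, Submodule.span_le]
    rintro - ⟨-, ⟨a, ha, b, hb, rfl⟩, -, ⟨a', ha', b', hb', rfl⟩, rfl⟩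
    change a + b - (a' + b') ∈ vectorSpan k A ⊔ vectorSpan k B
    rw [add_sub_add_comm]
    exact Submodule.add_mem_sup (vsub_mem_vectorSpan k ha ha') (vsub_mem_vectorSpan k hb hb')
  · rw [← vectorSpan_vadd k A b₀]
    refine vectorSpan_mono k ?_
    rintro - ⟨a, ha, rfl⟩
    change b₀ + a ∈ A + B
    rw [add_comm b₀ a]
    exact Set.add_mem_add ha hb₀
  · rw [← vectorSpan_vadd k B a₀]
    refine vectorSpan_mono k ?_
    rintro - ⟨b, hb, rfl⟩
    exact Set.add_mem_add ha₀ hb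

lemma vectorSpan_finsetSum {ι : Type*} (s : Finset ι) (f : ι → Set V)
    (h : ∀ i ∈ s, (f i).Nonempty) :
    vectorSpan k (∑ i ∈ s, f i) = s.sup fun i => vectorSpan k (f i) := by
  induction s using Finset.cons_induction with
  | empty => exact vectorSpan_singleton k 0
  | cons a s ha ih =>
    have hs : ∀ i ∈ s, (f i).Nonempty := fun i hi => h i (Finset.mem_cons_of_mem hi)
    rw [Finset.sum_cons, Finset.sup_cons, vectorSpan_add (h a (Finset.mem_cons_self a s))
      (Set.finsetSum_nonempty hs), ih hs]

end VectorSpan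

section MaxFace

omit [Fintype I] [DecidableEq I]

variable {P Q : Set (I → ℝ)} {w w₁ w₂ : (I → ℝ) →ₗ[ℝ] ℝ}

lemma maxFace_subset : maxFace P w ⊆ P := fun _ hx => hx.1

lemma maxFace_congr (h : ∀ x ∈ P, w₁ x = w₂ x) : maxFace P w₁ = maxFace P w₂ := by
  ext x
  refine and_congr_right fun hx => forall₂_congr fun y hy => ?_
  rw [h x hx, h y hy]

lemma maxFace_add (hP : (maxFace P w).Nonempty) (hQ : (maxFace Q w).Nonempty) :
    maxFace (P + Q) w = maxFace P w + maxFace Q w := by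
  obtain ⟨a₀, ha₀, ha₀max⟩ := hP
  obtain ⟨b₀, hb₀, hb₀max⟩ := hQ
  ext x
  constructor
  · rintro ⟨⟨a, ha, b, hb, rfl⟩, hmax⟩
    have h := hmax _ (Set.add_mem_add ha₀ hb₀)
    simp only [map_add] at h
    have ha' := ha₀max a ha
    have hb' := hb₀max b hb
    exact Set.add_mem_add ⟨ha, fun y hy => by linarith [ha₀max y hy]⟩
      ⟨hb, fun y hy => by linarith [hb₀max y hy]⟩
  · rintro ⟨a, ⟨ha, hamax⟩, b, ⟨hb, hbmax⟩, rfl⟩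
    refine ⟨Set.add_mem_add ha hb, ?_⟩
    rintro - ⟨p, hp, q, hq, rfl⟩
    simp only [map_add]
    exact add_le_add (hamax p hp) (hbmax q hq)

lemma maxFace_eq_sep_add (hQ : (maxFace Q w).Nonempty) :
    maxFace P w = {a ∈ P | ∃ b ∈ Q, a + b ∈ maxFace (P + Q) w} := by
  obtain ⟨b₀, hb₀, hb₀max⟩ := hQ
  ext a
  constructor
  · rintro ⟨ha, hamax⟩
    refine ⟨ha, b₀, hb₀, Set.add_mem_add ha hb₀, ?_⟩
    rintro - ⟨p, hp, q, hq, rfl⟩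
    simp only [map_add]
    exact add_le_add (hamax p hp) (hb₀max q hq)
  · rintro ⟨ha, b, hb, -, hmax⟩
    refine ⟨ha, fun y hy => ?_⟩
    have h := hmax _ (Set.add_mem_add hy hb)
    simp only [map_add] at h
    linarith

lemma maxFace_eq_of_maxFace_add_eq (hQ₁ : (maxFace Q w₁).Nonempty)
    (hQ₂ : (maxFace Q w₂).Nonempty) (h : maxFace (P + Q) w₁ = maxFace (P + Q) w₂) :
    maxFace P w₁ = maxFace P w₂ := by
  rw [maxFace_eq_sep_add hQ₁, maxFace_eq_sep_add hQ₂, h]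

lemma maxFace_sum {ι : Type*} (s : Finset ι) (f : ι → Set (I → ℝ))
    (h : ∀ i ∈ s, (maxFace (f i) w).Nonempty) :
    maxFace (∑ i ∈ s, f i) w = ∑ i ∈ s, maxFace (f i) w := by
  induction s using Finset.cons_induction with
  | empty =>
    ext x
    simp only [Finset.sum_empty, Set.mem_zero]
    exact ⟨fun hx => hx.1, fun hx => ⟨hx, fun y hy => by rw [Set.mem_zero.1 hy, hx]⟩⟩
  | cons a s ha ih =>
    have hs : ∀ i ∈ s, (maxFace (f i) w).Nonempty := fun i hi => h i (Finset.mem_cons_of_mem hi)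
    rw [Finset.sum_cons, Finset.sum_cons, maxFace_add (h a (Finset.mem_cons_self a s))
      (by rw [ih hs]; exact Set.finsetSum_nonempty hs), ih hs]

end MaxFace

def supportedOn (S : Finset I) : Submodule ℝ (I → ℝ) :=
  Submodule.pi (↑S)ᶜ fun _ => ⊥

omit [Fintype I] [DecidableEq I] in
lemma mem_supportedOn {S : Finset I} {x : I → ℝ} : x ∈ supportedOn S ↔ ∀ i ∉ S, x i = 0 := by
  simp [supportedOn]

lemma disjoint_supportedOn_compl (S : Finset I) :
    Disjoint (supportedOn S) (supportedOn Sᶜ) := by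
  refine Submodule.disjoint_def.2 fun x hx hx' => funext fun i => ?_
  by_cases hi : i ∈ S
  · exact mem_supportedOn.1 hx' i (Finset.notMem_compl.2 hi)
  · exact mem_supportedOn.1 hx i hi

lemma simplexOf_eq (J : Finset I) : simplexOf J = stdSimplex ℝ I ∩ supportedOn J := by
  refine (convexHull_min ?_ ((convex_stdSimplex ℝ I).inter (supportedOn J).convex)).antisymm ?_
  · rintro - ⟨j, hj, rfl⟩
    refine ⟨single_mem_stdSimplex ℝ j, mem_supportedOn.2 fun i hi => ?_⟩
    exact Pi.single_eq_of_ne (ne_of_mem_of_not_mem hj hi).symm _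
  · rintro x ⟨hx, hxJ⟩
    rw [SetLike.mem_coe, mem_supportedOn] at hxJ
    have hx_eq : ∑ i ∈ J, x i • Pi.single i (1 : ℝ) = x := by
      ext j
      by_cases hj : j ∈ J <;> simp [Pi.single_apply, hj, hxJ]
    rw [← hx_eq]
    exact (convex_convexHull ℝ _).sum_mem (fun i _ => hx.1 i)
      (by rw [Finset.sum_subset (Finset.subset_univ J) fun i _ hi => hxJ i hi, hx.2])
      fun i hi => subset_convexHull ℝ _ ⟨i, hi, rfl⟩

lemma simplexOf_subset_supportedOn (J : Finset I) : simplexOf J ⊆ supportedOn J := by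
  rw [simplexOf_eq]
  exact Set.inter_subset_right

lemma single_mem_simplexOf {J : Finset I} {i : I} : Pi.single i 1 ∈ simplexOf J ↔ i ∈ J := by
  refine ⟨fun h => ?_, fun hi => subset_convexHull ℝ _ ⟨i, hi, rfl⟩⟩
  by_contra hi
  simpa using mem_supportedOn.1 (simplexOf_subset_supportedOn J h) i hi

lemma simplexOf_injective : Function.Injective (simplexOf : Finset I → Set (I → ℝ)) :=
  fun J₁ J₂ h => Finset.ext fun i => by rw [← single_mem_simplexOf, h, single_mem_simplexOf]

lemma simplexOf_nonempty {J : Finset I} (hJ : J.Nonempty) : (simplexOf J).Nonempty :=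
  ⟨_, single_mem_simplexOf.2 hJ.choose_spec⟩

omit [Fintype I] in
lemma simplexOf_mono {J₁ J₂ : Finset I} (h : J₁ ⊆ J₂) : simplexOf J₁ ⊆ simplexOf J₂ :=
  convexHull_mono (Set.image_mono (Finset.coe_subset.2 h))

lemma finrank_vectorSpan_simplexOf {J : Finset I} (hJ : J.Nonempty) :
    Module.finrank ℝ (vectorSpan ℝ (simplexOf J)) = J.card - 1 := by
  rw [simplexOf, ← direction_affineSpan, affineSpan_convexHull, direction_affineSpan,
    ← Finset.coe_image]
  exact (Pi.linearIndependent_single_one I ℝ).affineIndependent.finrank_vectorSpan_image_finset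
    (Nat.succ_pred_eq_of_pos hJ.card_pos).symm

lemma LinearMap.apply_eq_sum_mul_single (w : (I → ℝ) →ₗ[ℝ] ℝ) (x : I → ℝ) :
    w x = ∑ i, x i * w (Pi.single i 1) := by
  conv_lhs => rw [← Finset.univ_sum_single x]
  rw [map_sum]
  refine Finset.sum_congr rfl fun i _ => ?_
  rw [← smul_eq_mul, ← map_smul, ← Pi.single_smul, smul_eq_mul, mul_one]

noncomputable def maxIndices (w : (I → ℝ) →ₗ[ℝ] ℝ) (J : Finset I) : Finset I :=
  J.filter fun i => ∀ j ∈ J, w (Pi.single j 1) ≤ w (Pi.single i 1)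

lemma maxFace_simplexOf (w : (I → ℝ) →ₗ[ℝ] ℝ) (J : Finset I) :
    maxFace (simplexOf J) w = simplexOf (maxIndices w J) := by
  rcases J.eq_empty_or_nonempty with rfl | hJ
  · simp [maxIndices, simplexOf, maxFace]
  obtain ⟨i₀, hi₀, hmax⟩ := J.exists_max_image (fun i => w (Pi.single i 1)) hJ
  set m := w (Pi.single i₀ 1)
  have mem_maxIndices : ∀ i ∈ J, i ∈ maxIndices w J ↔ w (Pi.single i 1) = m := fun i hi =>
    ⟨fun h => le_antisymm (hmax i hi) ((Finset.mem_filter.1 h).2 i₀ hi₀),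
      fun h => Finset.mem_filter.2 ⟨hi, fun j hj => h ▸ hmax j hj⟩⟩
  -- on `Δ_J`, the gap `m - w x` is a nonnegative combination of the vertex gaps
  have gap : ∀ x ∈ simplexOf J, m - w x = ∑ i ∈ J, x i * (m - w (Pi.single i 1)) := by
    intro x hx
    rw [simplexOf_eq] at hx
    obtain ⟨⟨-, hsum⟩, hxJ⟩ := hx
    have hxJ' : ∀ i ∉ J, x i = 0 := mem_supportedOn.1 hxJ
    rw [← Finset.sum_subset (Finset.subset_univ J) fun i _ hi => hxJ' i hi] at hsum
    rw [w.apply_eq_sum_mul_single, ← Finset.sum_subset (Finset.subset_univ J)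
      fun i _ hi => by rw [hxJ' i hi, zero_mul]]
    simp only [mul_sub, Finset.sum_sub_distrib, ← Finset.sum_mul, hsum, one_mul]
  have gap_nonneg : ∀ x ∈ simplexOf J, ∀ i ∈ J, 0 ≤ x i * (m - w (Pi.single i 1)) :=
    fun x hx i hi => mul_nonneg ((simplexOf_eq J ▸ hx).1.1 i) (sub_nonneg.2 (hmax i hi))
  have le_max : ∀ x ∈ simplexOf J, w x ≤ m := fun x hx =>
    sub_nonneg.1 ((gap x hx).symm ▸ Finset.sum_nonneg (gap_nonneg x hx))
  have eq_max_iff : ∀ x ∈ simplexOf J, w x = m ↔ ∀ i ∈ J, i ∉ maxIndices w J → x i = 0 := by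
    intro x hx
    rw [eq_comm, ← sub_eq_zero, gap x hx, Finset.sum_eq_zero_iff_of_nonneg (gap_nonneg x hx)]
    refine forall₂_congr fun i hi => ?_
    rw [mem_maxIndices i hi, mul_eq_zero, sub_eq_zero, eq_comm (a := m)]
    tauto
  ext x
  constructor
  · rintro ⟨hx, hxmax⟩
    have hvanish := (eq_max_iff x hx).1
      (le_antisymm (le_max x hx) (hxmax _ (single_mem_simplexOf.2 hi₀)))
    rw [simplexOf_eq] at hx ⊢
    refine ⟨hx.1, mem_supportedOn.2 fun i hi => ?_⟩
    by_cases hiJ : i ∈ J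
    · exact hvanish i hiJ hi
    · exact mem_supportedOn.1 hx.2 i hiJ
  · intro hx
    have hxJ : x ∈ simplexOf J := simplexOf_mono (Finset.filter_subset _ _) hx
    refine ⟨hxJ, fun y hy => (le_max y hy).trans ((eq_max_iff x hxJ).2 fun i _ hi => ?_).ge⟩
    exact mem_supportedOn.1 (simplexOf_subset_supportedOn _ hx) i hi

lemma maxIndices_nonempty (w : (I → ℝ) →ₗ[ℝ] ℝ) {J : Finset I} (hJ : J.Nonempty) :
    (maxIndices w J).Nonempty := by
  obtain ⟨i, hi, hmax⟩ := J.exists_max_image (fun i => w (Pi.single i 1)) hJ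
  exact ⟨i, Finset.mem_filter.2 ⟨hi, hmax⟩⟩

lemma maxIndices_eq_sdiff {w : (I → ℝ) →ₗ[ℝ] ℝ} {S J : Finset I}
    (hS : maxIndices w Finset.univ = Sᶜ) (hJ : ¬ J ⊆ S) : maxIndices w J = J \ S := by
  obtain ⟨t, htJ, htS⟩ := Finset.not_subset.1 hJ
  have hglobal : ∀ i, i ∉ S ↔ ∀ j, w (Pi.single j 1) ≤ w (Pi.single i 1) := fun i => by
    rw [← Finset.mem_compl, ← hS]
    simp [maxIndices]
  ext i
  simp only [maxIndices, Finset.mem_filter, Finset.mem_sdiff]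
  constructor
  · rintro ⟨hi, hmax⟩
    exact ⟨hi, (hglobal i).2 fun j => ((hglobal t).1 htS j).trans (hmax t htJ)⟩
  · rintro ⟨hi, hiS⟩
    exact ⟨hi, fun j _ => (hglobal i).1 hiS j⟩

lemma exists_maxIndices_univ_eq_compl {S : Finset I} (hS : S ≠ Finset.univ)
    (w' : (I → ℝ) →ₗ[ℝ] ℝ) :
    ∃ w : (I → ℝ) →ₗ[ℝ] ℝ, maxIndices w Finset.univ = Sᶜ ∧ ∀ x ∈ supportedOn S, w x = w' x := by
  obtain ⟨C, hC⟩ := Finite.exists_le fun i => w' (Pi.single i 1)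
  obtain ⟨t, ht⟩ : ∃ t, t ∉ S := by simpa [Finset.eq_univ_iff_forall] using hS
  -- keep the values of `w'` on `S` and raise all the others to a common maximum
  let v : I → ℝ := fun i => if i ∈ S then w' (Pi.single i 1) else C + 1
  refine ⟨Fintype.linearCombination ℝ v, ?_, fun x hx => ?_⟩
  · ext i
    simp only [maxIndices, Finset.mem_filter, Finset.mem_univ, true_and, true_implies,
      Finset.mem_compl, Fintype.linearCombination_apply_single, one_smul]
    by_cases hi : i ∈ S
    · refine iff_of_false (fun hmax => ?_) (not_not.2 hi)
      have := hmax t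
      simp only [v, if_pos hi, if_neg ht] at this
      linarith [hC i]
    · refine iff_of_true (fun j => ?_) hi
      simp only [v, if_neg hi]
      split_ifs
      exacts [(hC j).trans (le_add_of_nonneg_right zero_le_one), le_rfl]
  · rw [Fintype.linearCombination_apply, w'.apply_eq_sum_mul_single]
    refine Finset.sum_congr rfl fun i _ => ?_
    by_cases hi : i ∈ S
    · simp [v, hi]
    · simp [mem_supportedOn.1 hx i hi]

section Nestohedron

variable {ℬ : Finset (Finset I)}

lemma maxFace_nestohedron (hℬ : ∀ J ∈ ℬ, J.Nonempty) (w : (I → ℝ) →ₗ[ℝ] ℝ) :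
    maxFace (nestohedron ℬ) w = ∑ J ∈ ℬ, simplexOf (maxIndices w J) := by
  rw [nestohedron, maxFace_sum ℬ simplexOf fun J hJ => ?_]
  · exact Finset.sum_congr rfl fun J _ => maxFace_simplexOf w J
  · rw [maxFace_simplexOf]
    exact simplexOf_nonempty (maxIndices_nonempty w (hℬ J hJ))

lemma maxFace_nestohedron_nonempty (hℬ : ∀ J ∈ ℬ, J.Nonempty) (w : (I → ℝ) →ₗ[ℝ] ℝ) :
    (maxFace (nestohedron ℬ) w).Nonempty := by
  rw [maxFace_nestohedron hℬ]
  exact Set.finsetSum_nonempty fun J hJ => simplexOf_nonempty (maxIndices_nonempty w (hℬ J hJ))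

omit [Fintype I] in
lemma nestohedron_filter_add_filter_not (ℬ : Finset (Finset I)) (p : Finset I → Prop)
    [DecidablePred p] :
    nestohedron (ℬ.filter p) + nestohedron (ℬ.filter fun J => ¬ p J) = nestohedron ℬ :=
  Finset.sum_filter_add_sum_filter_not ℬ p simplexOf

lemma nestohedron_subset_supportedOn {S : Finset I} (h : ∀ J ∈ ℬ, J ⊆ S) :
    nestohedron ℬ ⊆ supportedOn S := by
  intro x hx
  obtain ⟨g, hg, rfl⟩ := (Set.mem_finsetSum _ _ _).1 hx
  exact Submodule.sum_mem _ fun J hJ =>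
    simplexOf_subset_supportedOn S (simplexOf_mono (h J hJ) (hg hJ))

lemma maxFace_nestohedron_filter_eq (hℬ : ∀ J ∈ ℬ, J.Nonempty) (p : Finset I → Prop)
    [DecidablePred p] {w₁ w₂ : (I → ℝ) →ₗ[ℝ] ℝ}
    (h : maxFace (nestohedron ℬ) w₁ = maxFace (nestohedron ℬ) w₂) :
    maxFace (nestohedron (ℬ.filter p)) w₁ = maxFace (nestohedron (ℬ.filter p)) w₂ := by
  have hℬ' : ∀ J ∈ ℬ.filter fun J => ¬ p J, J.Nonempty := fun J hJ =>
    hℬ J (Finset.mem_of_mem_filter J hJ)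
  rw [← nestohedron_filter_add_filter_not ℬ p] at h
  exact maxFace_eq_of_maxFace_add_eq (maxFace_nestohedron_nonempty hℬ' w₁)
    (maxFace_nestohedron_nonempty hℬ' w₂) h

lemma maxIndices_univ_eq_of_maxFace_eq (hℬ : ∀ J ∈ ℬ, J.Nonempty)
    (hconn : Finset.univ ∈ ℬ) {w₁ w₂ : (I → ℝ) →ₗ[ℝ] ℝ}
    (h : maxFace (nestohedron ℬ) w₁ = maxFace (nestohedron ℬ) w₂) :
    maxIndices w₁ Finset.univ = maxIndices w₂ Finset.univ := by
  have h_top := maxFace_nestohedron_filter_eq hℬ (· = Finset.univ) h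
  rw [Finset.filter_eq', if_pos hconn, nestohedron, Finset.sum_singleton, maxFace_simplexOf,
    maxFace_simplexOf] at h_top
  exact simplexOf_injective h_top

end Nestohedron

/-- The nestohedron of the contraction `ℬ / S`, its members `J \ S` counted with multiplicity. -/
noncomputable def contractedNestohedron (ℬ : Finset (Finset I)) (S : Finset I) :
    Set (I → ℝ) :=
  ∑ J ∈ ℬ.filter (fun J => ¬ J ⊆ S), simplexOf (J \ S)

def faces (P : Set (I → ℝ)) : Set (Set (I → ℝ)) :=
  {F | (∃ w, F = maxFace P w) ∧ F.Nonempty}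

section Faces

variable {ℬ : Finset (Finset I)} {S : Finset I}

lemma maxFace_nestohedron_eq_add (hℬ : ∀ J ∈ ℬ, J.Nonempty) {w : (I → ℝ) →ₗ[ℝ] ℝ}
    (hS : maxIndices w Finset.univ = Sᶜ) :
    maxFace (nestohedron ℬ) w =
      contractedNestohedron ℬ S + maxFace (nestohedron (ℬ.filter (· ⊆ S))) w := by
  have hin : ∀ J ∈ ℬ.filter (· ⊆ S), J.Nonempty := fun J hJ =>
    hℬ J (Finset.mem_of_mem_filter J hJ)
  have hout : ∀ J ∈ ℬ.filter fun J => ¬ J ⊆ S, J.Nonempty := fun J hJ =>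
    hℬ J (Finset.mem_of_mem_filter J hJ)
  conv_lhs => rw [← nestohedron_filter_add_filter_not ℬ (· ⊆ S), add_comm]
  rw [maxFace_add (maxFace_nestohedron_nonempty hout w) (maxFace_nestohedron_nonempty hin w),
    maxFace_nestohedron hout]
  congr 1
  exact Finset.sum_congr rfl fun J hJ => by rw [maxIndices_eq_sdiff hS (Finset.mem_filter.1 hJ).2]

lemma exists_maxFace_nestohedron_eq_add (hℬ : ∀ J ∈ ℬ, J.Nonempty) (hS : S ≠ Finset.univ)
    {F : Set (I → ℝ)} (hF : F ∈ faces (nestohedron (ℬ.filter (· ⊆ S)))) :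
    ∃ w : (I → ℝ) →ₗ[ℝ] ℝ, maxIndices w Finset.univ = Sᶜ ∧
      maxFace (nestohedron (ℬ.filter (· ⊆ S))) w = F ∧
      maxFace (nestohedron ℬ) w = contractedNestohedron ℬ S + F := by
  obtain ⟨⟨w', rfl⟩, -⟩ := hF
  obtain ⟨w, hwS, hww'⟩ := exists_maxIndices_univ_eq_compl hS w'
  have hface : maxFace (nestohedron (ℬ.filter (· ⊆ S))) w =
      maxFace (nestohedron (ℬ.filter (· ⊆ S))) w' := maxFace_congr fun x hx =>
    hww' x (nestohedron_subset_supportedOn (fun J hJ => (Finset.mem_filter.1 hJ).2) hx)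
  exact ⟨w, hwS, hface, by rw [maxFace_nestohedron_eq_add hℬ hwS, hface]⟩

lemma mem_faces_nestohedron (hℬ : ∀ J ∈ ℬ, J.Nonempty) {F : Set (I → ℝ)} :
    F ∈ faces (nestohedron ℬ) ↔ ∃ w, F = maxFace (nestohedron ℬ) w :=
  ⟨And.left, fun ⟨w, hw⟩ => ⟨⟨w, hw⟩, hw ▸ maxFace_nestohedron_nonempty hℬ w⟩⟩

lemma faces_nestohedron_finite (hℬ : ∀ J ∈ ℬ, J.Nonempty) : (faces (nestohedron ℬ)).Finite :=
  (Set.finite_range fun g : Finset I → Finset I => ∑ J ∈ ℬ, simplexOf (g J)).subset <| by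
    rintro - ⟨⟨w, rfl⟩, -⟩
    exact ⟨maxIndices w, (maxFace_nestohedron hℬ w).symm⟩

lemma faces_nestohedron_subset_supportedOn {F : Set (I → ℝ)}
    (hF : F ∈ faces (nestohedron (ℬ.filter (· ⊆ S)))) : F ⊆ supportedOn S := by
  obtain ⟨⟨w, rfl⟩, -⟩ := hF
  exact maxFace_subset.trans
    (nestohedron_subset_supportedOn fun J hJ => (Finset.mem_filter.1 hJ).2)

lemma faces_nestohedron_eq_biUnion (hℬ : ∀ J ∈ ℬ, J.Nonempty) (hconn : Finset.univ ∈ ℬ) :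
    faces (nestohedron ℬ) =
      ⋃ S ∈ (↑((Finset.univ : Finset I).powerset.erase Finset.univ) : Set (Finset I)),
      (contractedNestohedron ℬ S + ·) '' faces (nestohedron (ℬ.filter (· ⊆ S))) := by
  ext G
  simp only [Set.mem_iUnion, Set.mem_image, Finset.mem_coe, Finset.mem_erase, Finset.mem_powerset,
    Finset.subset_univ, and_true, exists_prop]
  constructor
  · rw [mem_faces_nestohedron hℬ]
    rintro ⟨w, rfl⟩
    have hS : (maxIndices w Finset.univ)ᶜᶜ = maxIndices w Finset.univ := compl_compl _
    refine ⟨(maxIndices w Finset.univ)ᶜ, fun h => ?_, _, ?_,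
      (maxFace_nestohedron_eq_add hℬ hS.symm).symm⟩
    · rw [Finset.compl_eq_univ_iff] at h
      exact (maxIndices_nonempty w (hℬ _ hconn)).ne_empty h
    · exact (mem_faces_nestohedron fun J hJ => hℬ J (Finset.mem_of_mem_filter J hJ)).2 ⟨w, rfl⟩
  · rintro ⟨S, hS, F, hF, rfl⟩
    obtain ⟨w, -, -, hw⟩ := exists_maxFace_nestohedron_eq_add hℬ hS hF
    exact (mem_faces_nestohedron hℬ).2 ⟨w, hw.symm⟩

lemma eq_of_contractedNestohedron_add_eq (hℬ : ∀ J ∈ ℬ, J.Nonempty) (hconn : Finset.univ ∈ ℬ)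
    {S₁ S₂ : Finset I} (hS₁ : S₁ ≠ Finset.univ) (hS₂ : S₂ ≠ Finset.univ) {F₁ F₂ : Set (I → ℝ)}
    (hF₁ : F₁ ∈ faces (nestohedron (ℬ.filter (· ⊆ S₁))))
    (hF₂ : F₂ ∈ faces (nestohedron (ℬ.filter (· ⊆ S₂))))
    (h : contractedNestohedron ℬ S₁ + F₁ = contractedNestohedron ℬ S₂ + F₂) :
    S₁ = S₂ ∧ F₁ = F₂ := by
  obtain ⟨w₁, hw₁S, hw₁F, hw₁⟩ := exists_maxFace_nestohedron_eq_add hℬ hS₁ hF₁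
  obtain ⟨w₂, hw₂S, hw₂F, hw₂⟩ := exists_maxFace_nestohedron_eq_add hℬ hS₂ hF₂
  have hface : maxFace (nestohedron ℬ) w₁ = maxFace (nestohedron ℬ) w₂ := by rw [hw₁, hw₂, h]
  obtain rfl : S₁ = S₂ := compl_injective <|
    hw₁S.symm.trans ((maxIndices_univ_eq_of_maxFace_eq hℬ hconn hface).trans hw₂S)
  exact ⟨rfl, hw₁F.symm.trans ((maxFace_nestohedron_filter_eq hℬ _ hface).trans hw₂F)⟩

lemma pairwiseDisjoint_image_contractedNestohedron_add (hℬ : ∀ J ∈ ℬ, J.Nonempty)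
    (hconn : Finset.univ ∈ ℬ) :
    (↑((Finset.univ : Finset I).powerset.erase Finset.univ) : Set (Finset I)).PairwiseDisjoint
      fun S => (contractedNestohedron ℬ S + ·) '' faces (nestohedron (ℬ.filter (· ⊆ S))) := by
  intro S₁ hS₁ S₂ hS₂ hne
  refine Set.disjoint_left.2 ?_
  rintro - ⟨F₁, hF₁, rfl⟩ ⟨F₂, hF₂, h⟩
  exact hne (eq_of_contractedNestohedron_add_eq hℬ hconn (Finset.mem_erase.1 hS₁).1
    (Finset.mem_erase.1 hS₂).1 hF₁ hF₂ h.symm).1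

lemma vectorSpan_contractedNestohedron (hconn : Finset.univ ∈ ℬ) (hS : S ≠ Finset.univ) :
    vectorSpan ℝ (contractedNestohedron ℬ S) = vectorSpan ℝ (simplexOf Sᶜ) := by
  rw [contractedNestohedron, vectorSpan_finsetSum _ _ fun J hJ =>
    simplexOf_nonempty (Finset.sdiff_nonempty.2 (Finset.mem_filter.1 hJ).2)]
  refine le_antisymm (Finset.sup_le fun J _ => vectorSpan_mono ℝ (simplexOf_mono ?_)) ?_
  · exact fun i hi => Finset.mem_compl.2 (Finset.mem_sdiff.1 hi).2
  · have huniv : Finset.univ ∈ ℬ.filter fun J => ¬ J ⊆ S :=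
      Finset.mem_filter.2 ⟨hconn, fun h => hS (Finset.univ_subset_iff.1 h)⟩
    rw [Finset.compl_eq_univ_sdiff]
    exact Finset.le_sup (f := fun J => vectorSpan ℝ (simplexOf (J \ S))) huniv

lemma polyDim_contractedNestohedron_add (hconn : Finset.univ ∈ ℬ) (hS : S ≠ Finset.univ)
    {F : Set (I → ℝ)} (hF : F.Nonempty) (hFS : F ⊆ supportedOn S) :
    polyDim (contractedNestohedron ℬ S + F) = (Fintype.card I - S.card - 1) + polyDim F := by
  have hSc : Sᶜ.Nonempty := Finset.nonempty_iff_ne_empty.2 (by rwa [Ne, Finset.compl_eq_empty_iff])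
  have hQ : (contractedNestohedron ℬ S).Nonempty := Set.finsetSum_nonempty fun J hJ =>
    simplexOf_nonempty (Finset.sdiff_nonempty.2 (Finset.mem_filter.1 hJ).2)
  have hQS : vectorSpan ℝ (contractedNestohedron ℬ S) ≤ supportedOn Sᶜ := by
    rw [vectorSpan_contractedNestohedron hconn hS]
    exact vectorSpan_le_of_subset (simplexOf_subset_supportedOn Sᶜ)
  have hdisj : vectorSpan ℝ (contractedNestohedron ℬ S) ⊓ vectorSpan ℝ F = ⊥ :=
    ((disjoint_supportedOn_compl S).symm.mono hQS (vectorSpan_le_of_subset hFS)).eq_bot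
  have hQdim : Module.finrank ℝ (vectorSpan ℝ (contractedNestohedron ℬ S)) =
      Fintype.card I - S.card - 1 := by
    rw [vectorSpan_contractedNestohedron hconn hS, finrank_vectorSpan_simplexOf hSc,
      Finset.card_compl]
  rw [polyDim, polyDim, vectorSpan_add hQ hF, ← hQdim,
    ← Submodule.finrank_sup_add_finrank_inf_eq, hdisj, finrank_bot, add_zero]

end Faces

theorem stmt8_general (ℬ : Finset (Finset I)) (hB : IsBuildingSet ℬ)
    (hconn : (Finset.univ : Finset I) ∈ ℬ) :
    fPoly (nestohedron ℬ) =
      ∑ S ∈ (Finset.univ : Finset I).powerset.erase Finset.univ,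
        Polynomial.X ^ (Fintype.card I - S.card - 1) *
          fPoly (nestohedron (ℬ.filter (· ⊆ S))) := by
  have hℬ : ∀ J ∈ ℬ, J.Nonempty := fun J hJ =>
    Finset.nonempty_iff_ne_empty.2 (ne_of_mem_of_not_mem hJ hB.2.1)
  have hℬS : ∀ S : Finset I, ∀ J ∈ ℬ.filter (· ⊆ S), J.Nonempty := fun S J hJ =>
    hℬ J (Finset.mem_of_mem_filter J hJ)
  change ∑ᶠ G ∈ faces (nestohedron ℬ), _ = _
  rw [faces_nestohedron_eq_biUnion hℬ hconn,
    finsum_mem_biUnion (pairwiseDisjoint_image_contractedNestohedron_add hℬ hconn)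
      (Finset.finite_toSet _) fun S _ => (faces_nestohedron_finite (hℬS S)).image _,
    finsum_mem_coe_finset]
  refine Finset.sum_congr rfl fun S hS => ?_
  have hS' : S ≠ Finset.univ := (Finset.mem_erase.1 hS).1
  rw [finsum_mem_image fun F₁ hF₁ F₂ hF₂ h =>
      (eq_of_contractedNestohedron_add_eq hℬ hconn hS' hS' hF₁ hF₂ h).2, fPoly, mul_finsum_mem]
  refine finsum_mem_congr rfl fun F hF => ?_
  rw [polyDim_contractedNestohedron_add hconn hS' hF.2 (faces_nestohedron_subset_supportedOn hF),
    pow_add]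

/-- For a connected building set `ℬ` on `I` with `|I| ≥ 2`, the `f`-polynomial of the
nestohedron `N_ℬ` satisfies `f_ℬ(t) = Σ_{S ⊊ I} t^{|I|−|S|−1} f_{ℬ|_S}(t)`, where
`ℬ|_S = {A ∈ ℬ : A ⊆ S}`. -/
theorem stmt8 (ℬ : Finset (Finset I)) (hB : IsBuildingSet ℬ)
    (hconn : (Finset.univ : Finset I) ∈ ℬ) (hI : 2 ≤ Fintype.card I) :
    fPoly (nestohedron ℬ) =
      ∑ S ∈ (Finset.univ : Finset I).powerset.erase Finset.univ,
        Polynomial.X ^ (Fintype.card I - S.card - 1) *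
          fPoly (nestohedron (ℬ.filter (· ⊆ S))) :=
  stmt8_general ℬ hB hconn
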